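/- arXiv:0810.3838 — 4 statements merged into one kernel-verified Lean document; each statement's English description precedes it below -/
import Mathlib

section
/- Let t ≥ 1, let a'_1, ..., a'_t be positive integers and b'_1 ≥ b'_2 ≥ ... ≥ b'_t ≥ 1 integers. Let b_1 ≥ b_2 ≥ ... ≥ b_T ≥ 0 be integers with T ≥ (∑_{i=1}^t a'_i) and suppose: (1) for every j ∈ [1,t], ∑_{k ≤ A_j} b_k ≥ ∑_{i ≤ j} a'_i b'_i, where A_j = ∑_{i ≤ j} a'_i; and (2) ∑_{k=1}^T b_k = ∑_{i=1}^t a'_i b'_i + (T - A_t) (i.e. the total of the b_k equals the total of the partition μ obtained by taking each b'_i with multiplicity a'_i together with T - A_t parts equal to 1). Then for every ℓ ∈ [1, T], the sum ∑_{k ≤ ℓ} b_k is greater than or equal to the sum of the ℓ largest parts of μ. In other words, the partition (b_1, ..., b_T) dominates μ. -/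
/-!
Because every `b'_i ≥ 1`, the run-length list `b'_1^{a'_1}, …, b'_t^{a'_t}, 1^{T - A_t}` is
already `μ` in decreasing order, so the sum of the `ℓ` largest parts of `μ` is its length-`ℓ`
prefix sum. That prefix sum is linear in `ℓ` on each run, whereas `ℓ ↦ ∑_{k < ℓ} b_k` is
concave because `b` is decreasing. The hypotheses compare the two at the ends of the runs, the
`A_j` and `T`, and concavity propagates the comparison to every `ℓ` in between.
-/

open Finset

theorem Antitone.le_sum_range_of_endpoints {B : ℕ → ℕ} (hB : Antitone B) {p q ℓ S v : ℕ}
    (hpℓ : p ≤ ℓ) (hℓq : ℓ ≤ q) (hp : S ≤ ∑ k ∈ range p, B k)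
    (hq : S + (q - p) * v ≤ ∑ k ∈ range q, B k) :
    S + (ℓ - p) * v ≤ ∑ k ∈ range ℓ, B k := by
  by_cases hbig : ∀ k ∈ Ico p ℓ, v ≤ B k
  · have hlow : (ℓ - p) * v ≤ ∑ k ∈ Ico p ℓ, B k := by
      simpa using card_nsmul_le_sum _ _ _ hbig
    rw [← sum_range_add_sum_Ico _ hpℓ]
    omega
  · push Not at hbig
    obtain ⟨k, hk, hBk⟩ := hbig
    have hhigh : ∑ k ∈ Ico ℓ q, B k ≤ (q - ℓ) * v := by
      simpa using sum_le_card_nsmul (Ico ℓ q) B v fun k' hk' =>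
        (hB (by simp at hk hk'; omega)).trans hBk.le
    rw [← sum_range_add_sum_Ico _ hℓq] at hq
    have : (q - p) * v = (ℓ - p) * v + (q - ℓ) * v := by rw [← add_mul]; congr 1; omega
    omega

def runLengthDecode {α : Type*} (bl : List (ℕ × α)) : List α :=
  bl.flatMap fun x => List.replicate x.1 x.2

theorem coe_runLengthDecode {α : Type*} (bl : List (ℕ × α)) :
    (runLengthDecode bl : Multiset α) = (bl.map fun x => Multiset.replicate x.1 x.2).sum := by
  induction bl with
  | nil => rfl
  | cons x bl ih => simp [runLengthDecode, ← ih, ← Multiset.coe_add, Multiset.coe_replicate]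

theorem pairwise_runLengthDecode {α : Type*} {R : α → α → Prop} [Std.Refl R]
    {bl : List (ℕ × α)} (h : (bl.map Prod.snd).Pairwise R) :
    (runLengthDecode bl).Pairwise R := by
  rw [List.pairwise_map] at h
  refine List.pairwise_flatMap.mpr ⟨fun x _ => List.pairwise_replicate.mpr (.inr (refl _)), ?_⟩
  exact h.imp fun hxy a ha b hb => by
    rw [List.eq_of_mem_replicate ha, List.eq_of_mem_replicate hb]; exact hxy

theorem sum_take_runLengthDecode_le {B : ℕ → ℕ} (hB : Antitone B) (bl : List (ℕ × ℕ))
    {p S : ℕ}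
    (hbl : ∀ m, S + ((bl.take m).map fun x => x.1 * x.2).sum
      ≤ ∑ k ∈ range (p + ((bl.take m).map Prod.fst).sum), B k) (ℓ : ℕ) :
    S + ((runLengthDecode bl).take ℓ).sum ≤ ∑ k ∈ range (p + ℓ), B k := by
  induction bl generalizing p S ℓ with
  | nil =>
    simpa [runLengthDecode] using
      (hbl 0).trans (sum_le_sum_of_subset (range_subset_range.mpr (by simp)))
  | cons x bl ih =>
    obtain ⟨n, v⟩ := x
    have h0 := hbl 0
    have h1 := hbl 1
    simp only [List.take_zero, List.map_nil, List.sum_nil, add_zero, List.take_succ_cons,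
      List.map_cons, List.sum_cons] at h0 h1
    simp only [runLengthDecode, List.flatMap_cons, List.take_append, List.take_replicate,
      List.sum_append, List.sum_replicate, smul_eq_mul, List.length_replicate]
    rcases le_or_gt ℓ n with hℓn | hnℓ
    · have := hB.le_sum_range_of_endpoints (ℓ := p + ℓ) (q := p + n)
        (by omega) (by omega) h0 (by simpa using h1)
      simpa [hℓn, Nat.sub_eq_zero_of_le hℓn] using this
    · have := ih (p := p + n) (S := S + n * v) (ℓ := ℓ - n) fun m => by
        simpa [add_assoc] using hbl (m + 1)
      rw [min_eq_right hnℓ.le, show p + ℓ = p + n + (ℓ - n) by omega]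
      simpa [runLengthDecode, add_assoc] using this

theorem List.reverse_sort_eq_of_pairwise_ge {α : Type*} [LinearOrder α] {l : List α}
    (hl : l.Pairwise (· ≥ ·)) : ((l : Multiset α).sort (· ≤ ·)).reverse = l := by
  refine List.Perm.eq_of_pairwise' (r := (· ≥ ·)) ?_ hl ?_
  · exact List.pairwise_reverse.mpr (Multiset.pairwise_sort _ _)
  · exact (List.reverse_perm _).trans (Multiset.coe_eq_coe.mp (Multiset.sort_eq _ _))

def zeroExtend {T : ℕ} (b : Fin T → ℕ) (k : ℕ) : ℕ :=
  if h : k < T then b ⟨k, h⟩ else 0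

theorem antitone_zeroExtend {T : ℕ} {b : Fin T → ℕ} (hb : Antitone b) :
    Antitone (zeroExtend b) := by
  intro k l hkl
  unfold zeroExtend
  split_ifs with hl hk
  · exact hb (Fin.mk_le_mk.mpr hkl)
  · omega
  · exact Nat.zero_le _
  · exact le_rfl

theorem sum_filter_val_lt_eq_sum_range_zeroExtend {T : ℕ} (b : Fin T → ℕ) (N : ℕ) :
    ∑ k ∈ univ.filter (fun k : Fin T => (k : ℕ) < N), b k =
      ∑ k ∈ range N, zeroExtend b k := by
  rw [sum_filter, sum_fin_eq_sum_range]
  calc _ = ∑ k ∈ (range T).filter (· < N), zeroExtend b k := by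
        rw [sum_filter]
        exact sum_congr rfl fun k hk => by simp [zeroExtend, mem_range.mp hk]
    _ = _ := by
        refine sum_subset (fun k => by simp) fun k hkN hkT => ?_
        simp_all [zeroExtend]

theorem stmt_3_general (t T : ℕ) (a' b' : Fin t → ℕ)
    (hb'1 : ∀ i, 1 ≤ b' i)
    (hb'dec : ∀ i j : Fin t, i ≤ j → b' j ≤ b' i)
    (b : Fin T → ℕ) (hbdec : ∀ k l : Fin T, k ≤ l → b l ≤ b k)
    (hcheck : ∀ j : Fin t,
      (∑ i ∈ Finset.univ.filter (fun i : Fin t => i ≤ j), a' i * b' i)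
        ≤ ∑ k ∈ Finset.univ.filter
            (fun k : Fin T => (k : ℕ) < ∑ i ∈ Finset.univ.filter (fun i : Fin t => i ≤ j), a' i),
            b k)
    (htotal : (∑ k, b k) = (∑ i, a' i * b' i) + (T - ∑ i, a' i)) :
    ∀ ℓ : ℕ, 1 ≤ ℓ → ℓ ≤ T →
      let μ : Multiset ℕ :=
        (∑ i, Multiset.replicate (a' i) (b' i)) + Multiset.replicate (T - ∑ i, a' i) 1
      ((μ.sort (· ≤ ·)).reverse.take ℓ).sum
        ≤ ∑ k ∈ Finset.univ.filter (fun k : Fin T => (k : ℕ) < ℓ), b k := by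
  intro ℓ _ _ μ
  set bl := List.ofFn (fun i => (a' i, b' i)) ++ [(T - ∑ i, a' i, 1)]
  have hμ : μ = runLengthDecode bl := by
    simp [bl, μ, coe_runLengthDecode, List.sum_ofFn]
  have hsorted : (runLengthDecode bl).Pairwise (· ≥ ·) := by
    refine pairwise_runLengthDecode ?_
    simp only [bl, List.map_append, List.map_ofFn, List.pairwise_append]
    simpa [List.pairwise_ofFn] using ⟨fun i j hij => hb'dec i j hij.le, hb'1⟩
  have hcheckpoints : ∀ m, ((bl.take m).map fun x => x.1 * x.2).sum
      ≤ ∑ k ∈ range (((bl.take m).map Prod.fst).sum), zeroExtend b k := by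
    intro m
    rcases le_or_gt m t with hmt | htm
    · have htake : bl.take m = (List.ofFn fun i => (a' i, b' i)).take m :=
        List.take_append_of_le_length (by simpa using hmt)
      simp only [htake, List.map_take, List.map_ofFn, List.sum_take_ofFn, Function.comp_def,
        ← sum_filter_val_lt_eq_sum_range_zeroExtend]
      rcases m with _ | j
      · simp
      · have hle : ∀ i : Fin t, i ≤ ⟨j, hmt⟩ ↔ (i : ℕ) < j + 1 := fun i => by
          rw [Fin.le_def, Nat.lt_succ_iff]
        simpa only [hle] using hcheck ⟨j, hmt⟩
    · rw [List.take_of_length_le (by simpa [bl] using htm),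
        ← sum_filter_val_lt_eq_sum_range_zeroExtend]
      simp only [bl, List.map_append, List.map_ofFn, List.sum_append, List.sum_ofFn,
        Function.comp_def, List.map_singleton, List.sum_singleton, mul_one]
      rw [filter_true_of_mem fun k _ => by have := k.isLt; omega, htotal]
  rw [hμ, List.reverse_sort_eq_of_pairwise_ge hsorted, sum_filter_val_lt_eq_sum_range_zeroExtend]
  simpa using sum_take_runLengthDecode_le (antitone_zeroExtend hbdec) bl (p := 0) (S := 0)
    (by simpa using hcheckpoints) ℓ

/-- Dominance from checkpoint inequalities: if the weakly decreasing sequence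
`b_1 ≥ ... ≥ b_T ≥ 0` satisfies the partial-sum inequality at each checkpoint
`A_j = ∑_{i ≤ j} a'_i` against `∑_{i ≤ j} a'_i b'_i`, and the total sums agree
with the partition `μ` consisting of each `b'_i` with multiplicity `a'_i` together
with `T - A_t` parts equal to `1`, then `(b_1, ..., b_T)` dominates `μ`. -/
theorem stmt_3 (t T : ℕ) (ht : 1 ≤ t) (a' b' : Fin t → ℕ)
    (ha' : ∀ i, 1 ≤ a' i) (hb'1 : ∀ i, 1 ≤ b' i)
    (hb'dec : ∀ i j : Fin t, i ≤ j → b' j ≤ b' i)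
    (b : Fin T → ℕ) (hbdec : ∀ k l : Fin T, k ≤ l → b l ≤ b k)
    (hT : (∑ i, a' i) ≤ T)
    (hcheck : ∀ j : Fin t,
      (∑ i ∈ Finset.univ.filter (fun i : Fin t => i ≤ j), a' i * b' i)
        ≤ ∑ k ∈ Finset.univ.filter
            (fun k : Fin T => (k : ℕ) < ∑ i ∈ Finset.univ.filter (fun i : Fin t => i ≤ j), a' i),
            b k)
    (htotal : (∑ k, b k) = (∑ i, a' i * b' i) + (T - ∑ i, a' i)) :
    ∀ ℓ : ℕ, 1 ≤ ℓ → ℓ ≤ T →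
      let μ : Multiset ℕ :=
        (∑ i, Multiset.replicate (a' i) (b' i)) + Multiset.replicate (T - ∑ i, a' i) 1
      ((μ.sort (· ≤ ·)).reverse.take ℓ).sum
        ≤ ∑ k ∈ Finset.univ.filter (fun k : Fin T => (k : ℕ) < ℓ), b k :=
  stmt_3_general t T a' b' hb'1 hb'dec b hbdec hcheck htotal
end

section
/- Let a, b be positive integers, v ≥ 0 an integer, and let a_1 > a_2 > ... > a_v be integers, all of the same parity as a+b-1, with a - b + 1 < a_j < a + b - 1 for all j. Define the partition O_v whose parts are: the number a - b + 1; two copies of (a_j + a_{j+1})/2 for each j ∈ [1, v-1] with j ≡ v - 1 (mod 2); together with the part a + b - 1 if v is even, or two copies of (a + b - 1 + a_1)/2 if v is odd. Define the partition O whose parts are two copies of a together with a_1, ..., a_v. Then O_v and O have the same total sum, and O_v dominates O (for every t, the sum of the t largest parts of O_v is ≥ the sum of the t largest parts of O). -/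
/-!
Put `p = a - b + 1` and `q = a + b - 1`, so that `a = (p + q) / 2` and every `a_j` lies in
`[p, q]`. Listed increasingly, `O_v` is `p` followed by `a_v, …, a_1, q` in which consecutive
pairs, counted from the bottom, are replaced by two copies of their mean. As `O` and `O_v` have
the same size and sum, dominance amounts to the `k` smallest parts of `O_v` summing to at most
the `k` smallest parts of `O`. Those of `O` are `m ≤ 2` copies of `a` and `r` of the `a_j`, so
they sum to at least `m a` plus the `r` smallest `a_j`; an induction along the pairs bounds the
first `m + r` entries of the list for `O_v` by this.
-/

namespace List

variable {M : Type*} [AddCommMonoid M] [LinearOrder M] [IsOrderedAddMonoid M]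

theorem sum_take_card_le_sum_of_pairwise {L : List M} (hL : L.Pairwise (· ≤ ·))
    {N : Multiset M} (hN : N ≤ ↑L) : (L.take (Multiset.card N)).sum ≤ N.sum := by
  induction L generalizing N with
  | nil => simp [Multiset.le_zero.mp hN]
  | cons x L ih =>
    obtain ⟨hx, hL⟩ := List.pairwise_cons.mp hL
    rcases Multiset.empty_or_exists_mem N with rfl | ⟨z, hz⟩
    · simp
    obtain ⟨y, hy, hxy, hrest⟩ : ∃ y ∈ N, x ≤ y ∧ N.erase y ≤ ↑L := by
      by_cases hxN : x ∈ N
      · exact ⟨x, hxN, le_rfl, by simpa using Multiset.erase_le_erase x hN⟩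
      · have hNL : N ≤ ↑L := (Multiset.le_cons_of_notMem hxN).mp hN
        exact ⟨z, hz, hx z (by simpa using Multiset.mem_of_le hNL hz),
          (Multiset.erase_le z N).trans hNL⟩
    rw [← Multiset.cons_erase hy, Multiset.card_cons, Multiset.sum_cons, List.take_succ_cons,
      List.sum_cons]
    exact add_le_add hxy (ih hL hrest)

end List

namespace Multiset

theorem exists_le_add_eq {α : Type*} [DecidableEq α] {s t u : Multiset α} (h : s ≤ t + u) :
    ∃ t' ≤ t, ∃ u' ≤ u, s = t' + u' :=
  ⟨s ∩ t, inter_le_right, s - t, Multiset.sub_le_iff_le_add'.mpr h,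
    by rw [add_comm, sub_add_inter]⟩

section OrderedMonoid

variable {M : Type*} [AddCommMonoid M] [LinearOrder M]

def bottomSum (s : Multiset M) (k : ℕ) : M := ((s.sort (· ≤ ·)).take k).sum

def topSum (s : Multiset M) (k : ℕ) : M := ((s.sort (· ≤ ·)).reverse.take k).sum

theorem bottomSum_min_card (s : Multiset M) (k : ℕ) :
    s.bottomSum (min k (card s)) = s.bottomSum k := by
  rw [bottomSum, bottomSum, List.take_eq_take_min (i := k), length_sort]

variable [IsOrderedAddMonoid M]

theorem bottomSum_card_le_sum {s N : Multiset M} (h : N ≤ s) : s.bottomSum (card N) ≤ N.sum :=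
  List.sum_take_card_le_sum_of_pairwise (pairwise_sort s _) (by rwa [sort_eq])

theorem bottomSum_coe_le (L : List M) (k : ℕ) : (L : Multiset M).bottomSum k ≤ (L.take k).sum := by
  have h := bottomSum_card_le_sum (coe_le.mpr (L.take_sublist k).subperm)
  rwa [coe_card, List.length_take, ← coe_card, bottomSum_min_card, sum_coe] at h

theorem exists_nsmul_add_sum_take_le_bottomSum (x : M) (n : ℕ) {β : List M}
    (hβ : β.Pairwise (· ≤ ·)) (k : ℕ) :
    ∃ m ≤ n, ∃ r ≤ β.length, m + r = min k (n + β.length) ∧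
      m • x + (β.take r).sum ≤ (replicate n x + ↑β).bottomSum k := by
  have hT : (↑(((replicate n x + ↑β).sort (· ≤ ·)).take k) : Multiset M) ≤ replicate n x + ↑β :=
    (coe_le.mpr (List.take_sublist _ _).subperm).trans_eq (sort_eq _ _)
  obtain ⟨T₁, hT₁, T₂, hT₂, hsplit⟩ := exists_le_add_eq hT
  obtain ⟨m, hm, rfl⟩ := le_replicate_iff.mp hT₁
  have hcard := congrArg card hsplit
  simp only [coe_card, List.length_take, length_sort, card_add, card_replicate] at hcard
  refine ⟨m, hm, card T₂, by simpa using card_le_card hT₂, hcard.symm, ?_⟩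
  have hsum := congrArg sum hsplit
  rw [sum_coe, sum_add, sum_replicate] at hsum
  rw [bottomSum, hsum]
  exact add_le_add_right (List.sum_take_card_le_sum_of_pairwise hβ hT₂) _

end OrderedMonoid

section OrderedGroup

variable {M : Type*} [AddCommGroup M] [LinearOrder M]

theorem topSum_eq_sum_sub_bottomSum (s : Multiset M) (t : ℕ) :
    s.topSum t = s.sum - s.bottomSum (card s - t) := by
  rw [topSum, bottomSum, List.take_reverse, List.sum_reverse, length_sort, eq_sub_iff_add_eq,
    add_comm, List.sum_take_add_sum_drop, ← sum_coe, sort_eq]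

theorem topSum_le_topSum_of_bottomSum_le [IsOrderedAddMonoid M] {s₁ s₂ : Multiset M}
    (hcard : card s₁ = card s₂) (hsum : s₁.sum = s₂.sum)
    (h : ∀ k, s₂.bottomSum k ≤ s₁.bottomSum k) (t : ℕ) : s₁.topSum t ≤ s₂.topSum t := by
  rw [topSum_eq_sum_sub_bottomSum, topSum_eq_sum_sub_bottomSum, hcard, hsum]
  exact sub_le_sub_left (h _) _

end OrderedGroup

end Multiset

section PairAvg

variable {K : Type*} [Field K]

def pairAvg : List K → List K
  | x :: y :: l => (x + y) / 2 :: (x + y) / 2 :: pairAvg l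
  | [x] => [x]
  | [] => []

@[simp] theorem length_pairAvg (l : List K) : (pairAvg l).length = l.length := by
  induction l using pairAvg.induct <;> simp [pairAvg, *]

theorem filter_bind_add_eq_pairAvg (f : ℕ → K) (q : K) : ∀ v : ℕ,
    ((Finset.range (v - 1)).filter (fun j => (j + 1) % 2 = (v - 1) % 2)).val.bind
        (fun j => Multiset.replicate 2 ((f j + f (j + 1)) / 2))
      + (if v % 2 = 0 then {q} else Multiset.replicate 2 ((q + f 0) / 2))
      = ↑(pairAvg ((List.range v).reverse.map f ++ [q]))
  | 0 => by simp [pairAvg]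
  | 1 => by
    simpa [pairAvg, add_comm q] using (Multiset.coe_replicate 2 ((q + f 0) / 2)).symm
  | v + 2 => by
    have hfilter : (Finset.range (v + 2 - 1)).filter (fun j => (j + 1) % 2 = (v + 2 - 1) % 2)
        = insert v ((Finset.range (v - 1)).filter (fun j => (j + 1) % 2 = (v - 1) % 2)) := by
      ext j
      simp only [Finset.mem_filter, Finset.mem_range, Finset.mem_insert]
      omega
    rw [hfilter, Finset.insert_val_of_notMem (by simp), Multiset.cons_bind, add_assoc,
      show (v + 2) % 2 = v % 2 by omega, filter_bind_add_eq_pairAvg f q v]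
    simp [List.range_succ, pairAvg, add_comm (f v)]

end PairAvg

section PairAvgOrder

variable {K : Type*} [Field K] [LinearOrder K] [IsStrictOrderedRing K]

@[simp] theorem sum_pairAvg (l : List K) : (pairAvg l).sum = l.sum := by
  induction l using pairAvg.induct with
  | case1 x y l ih =>
    simp only [pairAvg, List.sum_cons, ih]
    ring
  | case2 x => rfl
  | case3 => rfl

variable {p q : K} {l : List K}

theorem sum_take_succ_pairAvg_append_le (hq : ∀ x ∈ l, x ≤ q) {r : ℕ} (hr : r ≤ l.length) :
    ((pairAvg (l ++ [q])).take (r + 1)).sum ≤ q + (l.take r).sum := by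
  induction l using pairAvg.induct generalizing r with
  | case1 x y l ih =>
    simp only [List.mem_cons, forall_eq_or_imp] at hq
    rcases r with _ | _ | r
    all_goals simp only [zero_add, List.cons_append, pairAvg, List.take_succ_cons,
      List.take_zero, List.sum_cons, List.sum_nil, add_zero]
    · linarith
    · linarith
    · linarith [ih hq.2.2 (r := r) (by simpa using hr)]
  | case2 x =>
    simp only [List.mem_singleton, forall_eq] at hq
    obtain rfl | rfl : r = 0 ∨ r = 1 := by simp at hr; omega
    all_goals simp only [zero_add, List.cons_append, List.nil_append, pairAvg,
      List.take_succ_cons, List.take_zero, List.take_nil, List.sum_cons, List.sum_nil, add_zero]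
    · linarith
    · linarith
  | case3 => simp_all [pairAvg]

theorem sum_take_pairAvg_append_le (hp : ∀ x ∈ l, p ≤ x) (hq : ∀ x ∈ l, x ≤ q) (hpq : p ≤ q)
    {r : ℕ} (hr : r ≤ l.length) :
    ((pairAvg (l ++ [q])).take r).sum ≤ (q - p) / 2 + (l.take r).sum := by
  induction l using pairAvg.induct generalizing r with
  | case1 x y l ih =>
    simp only [List.mem_cons, forall_eq_or_imp] at hp hq
    rcases r with _ | _ | r
    all_goals simp only [zero_add, List.cons_append, pairAvg, List.take_succ_cons,
      List.take_zero, List.sum_cons, List.sum_nil, add_zero]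
    · linarith
    · linarith
    · linarith [ih hp.2.2 hq.2.2 (r := r) (by simpa using hr)]
  | case2 x =>
    simp only [List.mem_singleton, forall_eq] at hp hq
    obtain rfl | rfl : r = 0 ∨ r = 1 := by simp at hr; omega
    all_goals simp only [List.cons_append, List.nil_append, pairAvg,
      List.take_succ_cons, List.take_zero, List.sum_cons, List.sum_nil, add_zero]
    · linarith
    · linarith
  | case3 =>
    obtain rfl : r = 0 := by simpa using hr
    simp only [List.take_zero, List.sum_nil, add_zero]
    linarith

theorem add_sum_take_pairAvg_append_le (hp : ∀ x ∈ l, p ≤ x) {r : ℕ} (hr : r + 1 ≤ l.length) :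
    p + ((pairAvg (l ++ [q])).take r).sum ≤ (l.take (r + 1)).sum := by
  induction l using pairAvg.induct generalizing r with
  | case1 x y l ih =>
    simp only [List.mem_cons, forall_eq_or_imp] at hp
    rcases r with _ | _ | r
    all_goals simp only [zero_add, List.cons_append, pairAvg, List.take_succ_cons,
      List.take_zero, List.sum_cons, List.sum_nil, add_zero]
    · linarith
    · linarith
    · linarith [ih hp.2.2 (r := r) (by simpa using hr)]
  | case2 x =>
    obtain rfl : r = 0 := by simpa using hr
    simpa using hp
  | case3 => simp at hr

theorem sum_take_cons_pairAvg_append_le (hp : ∀ x ∈ l, p ≤ x) (hq : ∀ x ∈ l, x ≤ q)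
    (hpq : p ≤ q) {m r : ℕ} (hm : m ≤ 2) (hr : r ≤ l.length) :
    ((p :: pairAvg (l ++ [q])).take (m + r)).sum ≤ m * ((p + q) / 2) + (l.take r).sum := by
  interval_cases m
  · rcases r with _ | r
    · simp
    · rw [zero_add, List.take_succ_cons, List.sum_cons, Nat.cast_zero, zero_mul, zero_add]
      exact add_sum_take_pairAvg_append_le hp hr
  · rw [add_comm, List.take_succ_cons, List.sum_cons, Nat.cast_one, one_mul]
    linarith [sum_take_pairAvg_append_le hp hq hpq hr]
  · rw [show 2 + r = r + 1 + 1 by omega, List.take_succ_cons, List.sum_cons, Nat.cast_ofNat]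
    linarith [sum_take_succ_pairAvg_append_le hq hr]

theorem sum_cons_pairAvg_append (p q : K) (l : List K) :
    (↑(p :: pairAvg (l ++ [q])) : Multiset K).sum
      = (Multiset.replicate 2 ((p + q) / 2) + ↑l).sum := by
  simp only [Multiset.sum_coe, List.sum_cons, sum_pairAvg, List.sum_append, List.sum_nil,
    Multiset.sum_add, Multiset.sum_replicate, two_nsmul]
  ring

theorem topSum_le_topSum_cons_pairAvg (hl : l.Pairwise (· ≤ ·)) (hp : ∀ x ∈ l, p ≤ x)
    (hq : ∀ x ∈ l, x ≤ q) (hpq : p ≤ q) (t : ℕ) :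
    (Multiset.replicate 2 ((p + q) / 2) + ↑l).topSum t
      ≤ (↑(p :: pairAvg (l ++ [q])) : Multiset K).topSum t := by
  refine Multiset.topSum_le_topSum_of_bottomSum_le (by simp)
    (sum_cons_pairAvg_append p q l).symm (fun k => ?_) t
  obtain ⟨m, hm, r, hr, hmr, hle⟩ := Multiset.exists_nsmul_add_sum_take_le_bottomSum _ 2 hl k
  calc (↑(p :: pairAvg (l ++ [q])) : Multiset K).bottomSum k
      = (↑(p :: pairAvg (l ++ [q])) : Multiset K).bottomSum (m + r) := by
        rw [hmr, ← Multiset.bottomSum_min_card _ k, Multiset.coe_card, List.length_cons,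
          length_pairAvg, List.length_append, List.length_singleton, add_comm 2]
    _ ≤ ((p :: pairAvg (l ++ [q])).take (m + r)).sum := Multiset.bottomSum_coe_le _ _
    _ ≤ m * ((p + q) / 2) + (l.take r).sum := sum_take_cons_pairAvg_append_le hp hq hpq hm hr
    _ = m • ((p + q) / 2) + (l.take r).sum := by rw [nsmul_eq_mul]
    _ ≤ _ := hle

end PairAvgOrder

/-- `α j` stands for `a_{j+1}`. -/
theorem stmt_8_general (a b v : ℕ) (hb : 0 < b) (α : ℕ → ℤ)
    (hrange : ∀ j < v, (a : ℤ) - b + 1 < α j ∧ α j < (a : ℤ) + b - 1)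
    (hdec : ∀ i j, i < j → j < v → α j < α i) :
    let Ov : Multiset ℚ :=
      {(a : ℚ) - b + 1}
      + ((Finset.range (v - 1)).filter (fun j => (j + 1) % 2 = (v - 1) % 2)).val.bind
          (fun j => Multiset.replicate 2 (((α j : ℚ) + (α (j + 1) : ℚ)) / 2))
      + (if v % 2 = 0 then {(a : ℚ) + b - 1}
         else Multiset.replicate 2 (((a : ℚ) + b - 1 + (α 0 : ℚ)) / 2))
    let O : Multiset ℚ :=
      Multiset.replicate 2 (a : ℚ) + (Finset.range v).val.map (fun j => (α j : ℚ))
    Ov.sum = O.sum ∧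
      ∀ t : ℕ, ((O.sort (· ≤ ·)).reverse.take t).sum ≤ ((Ov.sort (· ≤ ·)).reverse.take t).sum := by
  intro Ov O
  set β : List ℚ := (List.range v).reverse.map (fun j => (α j : ℚ))
  have hOv : Ov = ↑(((a : ℚ) - b + 1) :: pairAvg (β ++ [(a : ℚ) + b - 1])) := by
    simp only [Ov, add_assoc, filter_bind_add_eq_pairAvg, Multiset.singleton_add,
      Multiset.cons_coe]
    rfl
  have hO : O = Multiset.replicate 2 (((a : ℚ) - b + 1 + (a + b - 1)) / 2) + ↑β := by
    rw [show ((a : ℚ) - b + 1 + (a + b - 1)) / 2 = a by ring]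
    simp only [O, β, List.map_reverse, Multiset.coe_reverse]
    rfl
  have hβ_sorted : β.Pairwise (· ≤ ·) := by
    simp only [β, List.pairwise_map, List.pairwise_reverse]
    refine List.pairwise_lt_range.imp_of_mem fun {i j} _ hj hij => ?_
    exact_mod_cast (hdec i j hij (List.mem_range.mp hj)).le
  have hβ_mem : ∀ x ∈ β, (a : ℚ) - b + 1 ≤ x ∧ x ≤ (a : ℚ) + b - 1 := by
    simp only [β, List.mem_map, List.mem_reverse, List.mem_range]
    rintro _ ⟨j, hj, rfl⟩
    exact ⟨by exact_mod_cast (hrange j hj).1.le, by exact_mod_cast (hrange j hj).2.le⟩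
  have hpq : (a : ℚ) - b + 1 ≤ a + b - 1 := by linarith [show (1 : ℚ) ≤ b by exact_mod_cast hb]
  rw [hOv, hO]
  exact ⟨sum_cons_pairAvg_append _ _ _, topSum_le_topSum_cons_pairAvg hβ_sorted
    (fun x hx => (hβ_mem x hx).1) (fun x hx => (hβ_mem x hx).2) hpq⟩

/-- Orbit-closure lemma (first lemma of "Une remarque sur les orbites unipotentes"):
the partition `O_v` with parts `a-b+1`, two copies of `(a_j + a_{j+1})/2` for
`j ≡ v-1 (mod 2)`, `1 ≤ j < v`, plus `a+b-1` (v even) or two copies of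
`(a+b-1+a_1)/2` (v odd), has the same total as, and dominates, the partition `O`
with parts two copies of `a` and the `a_j`. Here `a_1 > ... > a_v` are integers of
the parity of `a+b-1` with `a-b+1 < a_j < a+b-1`, encoded as `α (j-1) = a_j`. -/
theorem stmt_8 (a b v : ℕ) (ha : 0 < a) (hb : 0 < b) (α : ℕ → ℤ)
    (hrange : ∀ j < v, (a : ℤ) - b + 1 < α j ∧ α j < (a : ℤ) + b - 1)
    (hpar : ∀ j < v, α j % 2 = ((a : ℤ) + b - 1) % 2)
    (hdec : ∀ i j, i < j → j < v → α j < α i) :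
    let Ov : Multiset ℚ :=
      {(a : ℚ) - b + 1}
      + ((Finset.range (v - 1)).filter (fun j => (j + 1) % 2 = (v - 1) % 2)).val.bind
          (fun j => Multiset.replicate 2 (((α j : ℚ) + (α (j + 1) : ℚ)) / 2))
      + (if v % 2 = 0 then {(a : ℚ) + b - 1}
         else Multiset.replicate 2 (((a : ℚ) + b - 1 + (α 0 : ℚ)) / 2))
    let O : Multiset ℚ :=
      Multiset.replicate 2 (a : ℚ) + (Finset.range v).val.map (fun j => (α j : ℚ))
    Ov.sum = O.sum ∧
      ∀ t : ℕ, ((O.sort (· ≤ ·)).reverse.take t).sum ≤ ((Ov.sort (· ≤ ·)).reverse.take t).sum :=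
  stmt_8_general a b v hb α hrange hdec
end

section
/- Let a, b be positive integers, v ≥ 1 an integer, and let a_1 > a_2 > ... > a_v be integers, all of the same parity as a+b-1, with a - b + 1 < a_j < a + b - 1 for all j. Define the partition O' whose parts are: two copies of (a - b + 1 + a_v)/2; two copies of (a_j + a_{j+1})/2 for each j ∈ [1, v-1] with j ≡ v (mod 2); together with two copies of (a + b - 1 + a_1)/2 if v is even, or one copy of a + b - 1 if v is odd. Define the partition O whose parts are a_1, ..., a_v together with two copies of a. Then O' and O have the same total sum and O' dominates O. -/
/-!
Put `x 0 = a + b - 1`, `x j = a_j` for `1 ≤ j ≤ v` and `x (v + 1) = a - b + 1`: a decreasing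
sequence with `x 0 + x (v + 1) = 2a`. Then `O` consists of `x 1, …, x v` and two copies of the mean
`a` of `x 0` and `x (v + 1)`, while `O'` replaces each pair `x k, x (k + 1)` with `k ≡ v (mod 2)`
by two copies of its mean, so the sum of its `s + 1` largest parts is at least
`x 0 + ⋯ + x (s - 1) + θ` with `θ = (x s + x (s + 1)) / 2`. Any `s + 1` parts of `O` sum to at most
`(s + 1) θ + ∑_{y ∈ O} (y - θ)⁺ = x 1 + ⋯ + x s + θ + 2 (a - θ)⁺`, and `2 (a - θ)⁺ ≤ x 0 - x s`
because `x (v + 1) ≤ x (s + 1)`.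
-/

open Finset

section TopSum

variable {α : Type*} [LinearOrder α]

def topSum [AddCommMonoid α] (M : Multiset α) (t : ℕ) : α :=
  ((M.sort (· ≤ ·)).reverse.take t).sum

theorem reverse_sort_coe_of_pairwise {l : List α} (hl : l.Pairwise (· ≥ ·)) :
    ((l : Multiset α).sort (· ≤ ·)).reverse = l := by
  rw [List.reverse_eq_iff]
  refine List.Perm.eq_of_pairwise' (r := (· ≤ ·)) (Multiset.pairwise_sort _ _)
    (List.pairwise_reverse.2 hl) (Multiset.coe_eq_coe.1 ?_)
  rw [Multiset.sort_eq, Multiset.coe_reverse]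

theorem topSum_coe_of_pairwise [AddCommMonoid α] {l : List α} (hl : l.Pairwise (· ≥ ·)) (t : ℕ) :
    topSum (l : Multiset α) t = (l.take t).sum := by
  rw [topSum, reverse_sort_coe_of_pairwise hl]

theorem topSum_of_card_le [AddCommMonoid α] {M : Multiset α} {t : ℕ}
    (ht : Multiset.card M ≤ t) : topSum M t = M.sum := by
  rw [topSum, List.take_of_length_le (by simpa using ht), List.sum_reverse,
    ← Multiset.sum_coe, Multiset.sort_eq]

variable [AddCommGroup α] [IsOrderedAddMonoid α]

theorem List.sum_le_length_nsmul_add_sum_posPart (l : List α) (θ : α) :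
    l.sum ≤ l.length • θ + (l.map fun x => (x - θ)⁺).sum := by
  induction l with
  | nil => simp
  | cons x l ih =>
    have hx : x ≤ θ + (x - θ)⁺ := by simpa [add_comm] using add_le_add_left (le_posPart (x - θ)) θ
    rw [List.sum_cons, List.length_cons, List.map_cons, List.sum_cons, succ_nsmul]
    calc x + l.sum ≤ θ + (x - θ)⁺ + (l.length • θ + (l.map fun x => (x - θ)⁺).sum) :=
          add_le_add hx ih
      _ = _ := by abel

theorem topSum_le_nsmul_add_sum_posPart {M : Multiset α} {t : ℕ} (ht : t ≤ Multiset.card M)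
    (θ : α) : topSum M t ≤ t • θ + (M.map fun x => (x - θ)⁺).sum := by
  set l := (M.sort (· ≤ ·)).reverse
  have hl : (l : Multiset α) = M := by simp [l]
  have hlen : (l.take t).length = t := by simpa [l] using ht
  calc topSum M t = (l.take t).sum := rfl
    _ ≤ t • θ + ((l.take t).map fun x => (x - θ)⁺).sum := by
      simpa only [hlen] using List.sum_le_length_nsmul_add_sum_posPart (l.take t) θ
    _ ≤ t • θ + (l.map fun x => (x - θ)⁺).sum := by
      gcongr
      refine ((List.take_sublist t l).map _).sum_le_sum fun _ hy => ?_
      obtain ⟨x, -, rfl⟩ := List.mem_map.1 hy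
      exact posPart_nonneg _
    _ = t • θ + (M.map fun x => (x - θ)⁺).sum := by rw [← hl, Multiset.map_coe, Multiset.sum_coe]

theorem sum_range_posPart_sub_eq {y : ℕ → α} (hy : Antitone y) {n s : ℕ} (hs : s ≤ n) {θ : α}
    (hys : y s ≤ θ) (hθ : ∀ j < s, θ ≤ y j) :
    ∑ j ∈ range n, (y j - θ)⁺ = ∑ j ∈ range s, (y j - θ) := by
  rw [← sum_range_add_sum_Ico _ hs]
  have hhead : ∀ j ∈ range s, (y j - θ)⁺ = y j - θ := fun j hj =>
    posPart_eq_self.2 (sub_nonneg.2 (hθ j (mem_range.1 hj)))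
  have htail : ∀ j ∈ Ico s n, (y j - θ)⁺ = 0 := fun j hj =>
    posPart_eq_zero.2 (sub_nonpos.2 ((hy (mem_Ico.1 hj).1).trans hys))
  rw [sum_congr rfl hhead, sum_eq_zero htail, add_zero]

end TopSum

section Frame

variable {α : Type*}

def frame (top bot : α) (y : ℕ → α) (v j : ℕ) : α :=
  if j = 0 then top else if j ≤ v then y (j - 1) else bot

theorem antitone_frame [Preorder α] {top bot : α} {y : ℕ → α} {v : ℕ} (hv : 0 < v)
    (htop : ∀ j < v, y j ≤ top) (hbot : ∀ j < v, bot ≤ y j) (hy : AntitoneOn y (Set.Iio v)) :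
    Antitone (frame top bot y v) := by
  refine antitone_nat_of_succ_le fun j => ?_
  rcases le_or_gt (j + 1) v with hj | hj
  · rcases j with _ | j
    · simpa [frame, hj] using htop 0 hv
    · simpa [frame, hj, (Nat.le_succ _).trans hj] using
        hy (show j < v by omega) (show j + 1 < v by omega) j.le_succ
  · rcases Nat.lt_or_ge v j with hj' | hj'
    · simp [frame, show ¬j + 1 ≤ v by omega, show j ≠ 0 by omega, show ¬j ≤ v by omega]
    · simpa [frame, show ¬j + 1 ≤ v by omega, show j ≠ 0 by omega, hj'] using
        hbot (j - 1) (by omega)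

theorem frame_zero (top bot : α) (y : ℕ → α) (v : ℕ) : frame top bot y v 0 = top :=
  rfl

theorem frame_succ_of_lt (top bot : α) (y : ℕ → α) {v j : ℕ} (hj : j < v) :
    frame top bot y v (j + 1) = y j := by
  simp [frame, Nat.succ_le_of_lt hj]

theorem frame_of_lt (top bot : α) (y : ℕ → α) {v j : ℕ} (hj : v < j) :
    frame top bot y v j = bot := by
  simp [frame, show j ≠ 0 by omega, show ¬j ≤ v by omega]

end Frame

section Paired

variable {K : Type*} [Field K] [LinearOrder K] [IsStrictOrderedRing K] {x : ℕ → K}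

theorem topSum_replicate_add_le (hx : Antitone x) {n s : ℕ} (hs : s ≤ n) {c : K}
    (hc : x 0 + x (n + 1) = 2 * c) :
    topSum (Multiset.replicate 2 c + (range n).val.map (fun j => x (j + 1))) (s + 1) ≤
      ∑ j ∈ range s, x j + (x s + x (s + 1)) / 2 := by
  set θ := (x s + x (s + 1)) / 2 with hθ
  have hstep : x (s + 1) ≤ x s := hx s.le_succ
  have hθ_le : θ ≤ x s := by linarith
  have hle_θ : x (s + 1) ≤ θ := by linarith
  have htail : ∑ j ∈ range n, (x (j + 1) - θ)⁺ = ∑ j ∈ range s, (x (j + 1) - θ) :=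
    sum_range_posPart_sub_eq (hx.comp_monotone fun _ _ h => Nat.succ_le_succ h) hs hle_θ
      fun j hj => hθ_le.trans (hx (show j + 1 ≤ s by omega))
  have htelescope : ∑ j ∈ range s, x j = x 0 - x s + ∑ j ∈ range s, x (j + 1) := by
    rw [← sum_range_sub' x s, ← sum_add_distrib]
    exact sum_congr rfl fun _ _ => by ring
  have hmiddle : 2 * (c - θ)⁺ ≤ x 0 - x s := by
    have hbot : x (n + 1) ≤ x (s + 1) := hx (by omega)
    rcases le_total c θ with h | h
    · rw [posPart_eq_zero.2 (sub_nonpos.2 h)]; linarith [hx (Nat.zero_le s)]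
    · rw [posPart_eq_self.2 (sub_nonneg.2 h)]; linarith
  calc topSum (Multiset.replicate 2 c + (range n).val.map (fun j => x (j + 1))) (s + 1)
      ≤ (s + 1) • θ + 2 • (c - θ)⁺ + ∑ j ∈ range n, (x (j + 1) - θ)⁺ := by
        refine (topSum_le_nsmul_add_sum_posPart (by simp; omega) θ).trans_eq ?_
        simp [Multiset.map_map, add_assoc, two_mul, Finset.sum]
    _ ≤ ∑ j ∈ range s, x j + (x s + x (s + 1)) / 2 := by
        rw [htail, sum_sub_distrib, htelescope]
        simp only [sum_const, card_range, nsmul_eq_mul]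
        push_cast
        linarith

/-- The parts, in decreasing order when `x` is antitone, of the partition obtained from
`x 0, x 1, …` by replacing each pair `x k, x (k + 1)` with `k ≡ p [MOD 2]` by two copies of its
mean. For odd `p` the part `x 0` stays alone: at `k = 0` the second branch is
`(x 0 + x 0) / 2`, as `0 - 1 = 0` in `ℕ`. -/
def pairedAvg (p : ℕ) (x : ℕ → K) (k : ℕ) : K :=
  if k % 2 = p % 2 then (x k + x (k + 1)) / 2 else (x (k - 1) + x k) / 2

theorem antitone_pairedAvg (hx : Antitone x) (p : ℕ) : Antitone (pairedAvg p x) := by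
  refine antitone_nat_of_succ_le fun k => ?_
  unfold pairedAvg
  split_ifs with hk hk'
  · omega
  · linarith [hx (show k - 1 ≤ k + 1 by omega), hx (show k ≤ k + 1 + 1 by omega)]
  · simp
  · omega

theorem sum_range_succ_pairedAvg (p : ℕ) (x : ℕ → K) (s : ℕ) :
    ∑ k ∈ range (s + 1), pairedAvg p x k =
      ∑ j ∈ range (s + 1), x j - if s % 2 = p % 2 then (x s - x (s + 1)) / 2 else 0 := by
  induction s with
  | zero =>
    simp only [zero_add, sum_range_one, pairedAvg]
    split_ifs <;> ring
  | succ s ih =>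
    rw [sum_range_succ, ih, sum_range_succ _ (s + 1)]
    unfold pairedAvg
    split_ifs <;> first | omega | (rw [Nat.add_sub_cancel]; ring) | ring

theorem le_sum_range_succ_pairedAvg (hx : Antitone x) (p s : ℕ) :
    ∑ j ∈ range s, x j + (x s + x (s + 1)) / 2 ≤ ∑ k ∈ range (s + 1), pairedAvg p x k := by
  rw [sum_range_succ_pairedAvg, sum_range_succ]
  have := hx s.le_succ
  split_ifs <;> linarith

theorem sum_range_pairedAvg (p : ℕ) (x : ℕ → K) :
    ∑ k ∈ range (p + 2), pairedAvg p x k = ∑ j ∈ range (p + 2), x j := by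
  rw [sum_range_succ_pairedAvg, if_neg (by omega), sub_zero]

theorem map_range_pairedAvg (p : ℕ) (x : ℕ → K) {n : ℕ} (hn : n % 2 = p % 2) :
    (Multiset.range n).map (pairedAvg p x) = (if p % 2 = 1 then {x 0} else 0) +
      ∑ k ∈ range n, if k % 2 = p % 2 then Multiset.replicate 2 ((x k + x (k + 1)) / 2) else 0 := by
  induction n using Nat.twoStepInduction with
  | zero => simp; omega
  | one => simp [pairedAvg]; split_ifs <;> first | omega | simp
  | more m ih _ =>
    have hm : m % 2 = p % 2 := by omega
    rw [sum_range_succ, sum_range_succ, ← add_assoc, ← add_assoc, ← ih hm, if_pos hm,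
      if_neg (by omega), Multiset.range_succ, Multiset.range_succ, Multiset.map_cons,
      Multiset.map_cons]
    simp only [pairedAvg, if_pos hm, if_neg (show ¬(m + 1) % 2 = p % 2 by omega),
      Nat.add_sub_cancel]
    simp [Multiset.replicate_succ, ← Multiset.singleton_add, add_comm, add_left_comm]

theorem map_range_pairedAvg_eq {v : ℕ} (hv : 0 < v) (x : ℕ → K) :
    (Multiset.range (v + 2)).map (pairedAvg v x) =
      Multiset.replicate 2 ((x (v + 1) + x v) / 2)
      + ((range (v - 1)).filter (fun j => (j + 1) % 2 = v % 2)).val.bind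
          (fun j => Multiset.replicate 2 ((x (j + 1) + x (j + 2)) / 2))
      + if v % 2 = 0 then Multiset.replicate 2 ((x 0 + x 1) / 2) else {x 0} := by
  obtain ⟨w, rfl⟩ : ∃ w, v = w + 1 := ⟨v - 1, by omega⟩
  have hbind : ((range w).filter (fun j => (j + 1) % 2 = (w + 1) % 2)).val.bind
      (fun j => Multiset.replicate 2 ((x (j + 1) + x (j + 2)) / 2)) =
      ∑ j ∈ range w, if (j + 1) % 2 = (w + 1) % 2 then
        Multiset.replicate 2 ((x (j + 1) + x (j + 1 + 1)) / 2) else 0 := by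
    rw [← sum_filter]; rfl
  rw [map_range_pairedAvg (w + 1) x (n := w + 1 + 2) (by omega), Nat.add_sub_cancel, hbind,
    sum_range_succ, sum_range_succ, sum_range_succ', if_pos rfl,
    if_neg (show ¬(w + 1 + 1) % 2 = (w + 1) % 2 by omega)]
  rcases Nat.mod_two_eq_zero_or_one (w + 1) with h | h <;>
    simp only [h, Nat.zero_mod, zero_add, add_zero, ite_true, ite_false, zero_ne_one,
      one_ne_zero, add_comm (x (w + 1 + 1))] <;>
    abel

theorem map_range_pairedAvg_frame {v : ℕ} (hv : 0 < v) (top bot : K) (y : ℕ → K) :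
    (Multiset.range (v + 2)).map (pairedAvg v (frame top bot y v)) =
      Multiset.replicate 2 ((bot + y (v - 1)) / 2)
      + ((range (v - 1)).filter (fun j => (j + 1) % 2 = v % 2)).val.bind
          (fun j => Multiset.replicate 2 ((y j + y (j + 1)) / 2))
      + if v % 2 = 0 then Multiset.replicate 2 ((top + y 0) / 2) else {top} := by
  have hpairs : ∀ j ∈ ((range (v - 1)).filter fun j => (j + 1) % 2 = v % 2).val,
      Multiset.replicate 2 ((frame top bot y v (j + 1) + frame top bot y v (j + 2)) / 2) =
        Multiset.replicate 2 ((y j + y (j + 1)) / 2) := fun j hj => by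
    have hj : j < v - 1 := by simp only [mem_val, mem_filter, mem_range] at hj; exact hj.1
    rw [frame_succ_of_lt _ _ _ (by omega), frame_succ_of_lt _ _ _ (show j + 1 < v by omega)]
  have hlast : frame top bot y v v = y (v - 1) := by
    simpa [Nat.sub_add_cancel hv] using frame_succ_of_lt top bot y (show v - 1 < v by omega)
  rw [map_range_pairedAvg_eq hv, frame_zero, frame_succ_of_lt _ _ _ hv, hlast,
    frame_of_lt _ _ _ (lt_add_one v), Multiset.bind_congr hpairs]

theorem sum_map_range_pairedAvg {n : ℕ} {c : K} (hc : x 0 + x (n + 1) = 2 * c) :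
    ((Multiset.range (n + 2)).map (pairedAvg n x)).sum =
      (Multiset.replicate 2 c + (range n).val.map (fun j => x (j + 1))).sum := by
  have hsum : ∑ k ∈ range (n + 2), pairedAvg n x k =
      ∑ j ∈ range n, x (j + 1) + x 0 + x (n + 1) := by
    rw [sum_range_pairedAvg, sum_range_succ, sum_range_succ']
  simp only [← range_val, sum_map_val, Multiset.sum_add, Multiset.sum_replicate, hsum,
    nsmul_eq_mul, Nat.cast_ofNat, ← hc]
  ring

theorem topSum_le_topSum_pairedAvg (hx : Antitone x) {n : ℕ} {c : K}
    (hc : x 0 + x (n + 1) = 2 * c) (t : ℕ) :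
    topSum (Multiset.replicate 2 c + (range n).val.map (fun j => x (j + 1))) t ≤
      topSum ((Multiset.range (n + 2)).map (pairedAvg n x)) t := by
  have hsorted : ((List.range (n + 2)).map (pairedAvg n x)).Pairwise (· ≥ ·) :=
    List.pairwise_map.2 (List.pairwise_lt_range.imp fun h => antitone_pairedAvg hx n h.le)
  rcases t with _ | s
  · simp [topSum]
  rcases le_or_gt s n with hs | hs
  · calc _ ≤ ∑ j ∈ range s, x j + (x s + x (s + 1)) / 2 := topSum_replicate_add_le hx hs hc
      _ ≤ ∑ k ∈ range (s + 1), pairedAvg n x k := le_sum_range_succ_pairedAvg hx n s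
      _ = _ := by
        rw [Multiset.range, Multiset.map_coe, topSum_coe_of_pairwise hsorted, ← List.map_take,
          List.take_range, min_eq_left (by omega), ← sum_map_val]
        rfl
  · rw [topSum_of_card_le (by simp; omega), topSum_of_card_le (by simp; omega),
      sum_map_range_pairedAvg hc]

end Paired

theorem stmt_9_general (a b v : ℕ) (hv : 1 ≤ v) (α : ℕ → ℤ)
    (hrange : ∀ j < v, (a : ℤ) - b + 1 < α j ∧ α j < (a : ℤ) + b - 1)
    (hdec : ∀ i j, i < j → j < v → α j < α i) :
    let O' : Multiset ℚ :=
      Multiset.replicate 2 (((a : ℚ) - b + 1 + (α (v - 1) : ℚ)) / 2)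
      + ((Finset.range (v - 1)).filter (fun j => (j + 1) % 2 = v % 2)).val.bind
          (fun j => Multiset.replicate 2 (((α j : ℚ) + (α (j + 1) : ℚ)) / 2))
      + (if v % 2 = 0 then Multiset.replicate 2 (((a : ℚ) + b - 1 + (α 0 : ℚ)) / 2)
         else {(a : ℚ) + b - 1})
    let O : Multiset ℚ :=
      Multiset.replicate 2 (a : ℚ) + (Finset.range v).val.map (fun j => (α j : ℚ))
    O'.sum = O.sum ∧
      ∀ t : ℕ, ((O.sort (· ≤ ·)).reverse.take t).sum ≤ ((O'.sort (· ≤ ·)).reverse.take t).sum := by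
  intro O' O
  set x : ℕ → ℚ := frame ((a : ℚ) + b - 1) ((a : ℚ) - b + 1) (fun j => (α j : ℚ)) v with hxdef
  have hx : Antitone x := by
    refine antitone_frame hv (fun j hj => ?_) (fun j hj => ?_) fun i _ j hj hij => ?_
    · exact_mod_cast (hrange j hj).2.le
    · exact_mod_cast (hrange j hj).1.le
    · exact_mod_cast (hij.eq_or_lt.elim (fun h => h ▸ le_rfl) fun h => (hdec i j h hj).le)
  have hc : x 0 + x (v + 1) = 2 * a := by
    rw [hxdef, frame_zero, frame_of_lt _ _ _ (lt_add_one v)]; ring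
  have hO : O = Multiset.replicate 2 (a : ℚ) + (range v).val.map (fun j => x (j + 1)) :=
    congrArg (Multiset.replicate 2 (a : ℚ) + ·) <| Multiset.map_congr rfl fun j hj => by
      rw [hxdef, frame_succ_of_lt _ _ _ (by simpa using hj)]
  have hO' : O' = (Multiset.range (v + 2)).map (pairedAvg v x) :=
    (map_range_pairedAvg_frame hv _ _ _).symm
  rw [hO, hO']
  exact ⟨sum_map_range_pairedAvg hc, topSum_le_topSum_pairedAvg hx hc⟩

/-- Orbit-closure lemma (second lemma of "Une remarque sur les orbites unipotentes"):
the partition `O'` with parts two copies of `(a-b+1+a_v)/2`, two copies of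
`(a_j + a_{j+1})/2` for `j ≡ v (mod 2)`, `1 ≤ j < v`, plus two copies of
`(a+b-1+a_1)/2` (v even) or one copy of `a+b-1` (v odd), has the same total as,
and dominates, the partition `O` with parts the `a_j` together with two copies
of `a`. Here `a_1 > ... > a_v` are integers of the parity of `a+b-1` with
`a-b+1 < a_j < a+b-1`, encoded as `α (j-1) = a_j`. -/
theorem stmt_9 (a b v : ℕ) (ha : 0 < a) (hb : 0 < b) (hv : 1 ≤ v) (α : ℕ → ℤ)
    (hrange : ∀ j < v, (a : ℤ) - b + 1 < α j ∧ α j < (a : ℤ) + b - 1)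
    (hpar : ∀ j < v, α j % 2 = ((a : ℤ) + b - 1) % 2)
    (hdec : ∀ i j, i < j → j < v → α j < α i) :
    let O' : Multiset ℚ :=
      Multiset.replicate 2 (((a : ℚ) - b + 1 + (α (v - 1) : ℚ)) / 2)
      + ((Finset.range (v - 1)).filter (fun j => (j + 1) % 2 = v % 2)).val.bind
          (fun j => Multiset.replicate 2 (((α j : ℚ) + (α (j + 1) : ℚ)) / 2))
      + (if v % 2 = 0 then Multiset.replicate 2 (((a : ℚ) + b - 1 + (α 0 : ℚ)) / 2)
         else {(a : ℚ) + b - 1})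
    let O : Multiset ℚ :=
      Multiset.replicate 2 (a : ℚ) + (Finset.range v).val.map (fun j => (α j : ℚ))
    O'.sum = O.sum ∧
      ∀ t : ℕ, ((O.sort (· ≤ ·)).reverse.take t).sum ≤ ((O'.sort (· ≤ ·)).reverse.take t).sum :=
  stmt_9_general a b v hv α hrange hdec
end

section
/- Let t ≥ 1, let (a'_i, b'_i) for i ∈ [1, t] be pairs of positive integers with b'_1 ≥ ... ≥ b'_t > 1, and let (a_α, b_α) for α in a finite index set A be pairs of positive integers. Suppose that for every j ∈ [1, t], the multiset E_{≤j} = ⋃_{i ≤ j} { (a'_i - b'_i)/2, (a'_i - b'_i)/2 - 1, ..., -(a'_i + b'_i)/2 + 1 } admits a decomposition as a disjoint multiset union ⋃_{α ∈ A} D'_α(j), where each D'_α(j) is an initial subsegment (possibly empty) of the decreasing segment { (a_α - b_α)/2, ..., -(a_α + b_α)/2 + 1 } starting at (a_α - b_α)/2. Then for every j ∈ [1, t]: the sum of the (∑_{i ≤ j} a'_i) largest elements of the multiset { b_α with multiplicity a_α : α ∈ A } is at least ∑_{i ≤ j} a'_i b'_i. -/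
/-!
Both sides of the decomposition have the same cardinality and the same sum. A full segment
attached to `(a', b')` sums to `a' (1 - b') / 2`, while an initial subsegment of length
`m ≤ a` of the segment attached to `(a, b)` sums to at least `m (1 - b) / 2`. Comparing sums
and cancelling cardinalities gives `∑ a'_i b'_i ≤ ∑ m_α b_α`, and the right side is the sum of
a submultiset of `{b_α with multiplicity a_α}` of the right size, hence at most the sum of its
largest elements.
-/

open Finset

theorem List.sum_le_sum_take_card_of_pairwise_ge {M : Type*} [AddCommMonoid M] [PartialOrder M]
    [IsOrderedAddMonoid M] {l : List M} (hl : l.Pairwise (· ≥ ·)) {ν : Multiset M}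
    (hν : ν ≤ l) : ν.sum ≤ (l.take (Multiset.card ν)).sum := by
  induction l generalizing ν with
  | nil => simp [Multiset.le_zero.mp (by simpa using hν)]
  | cons a l ih =>
    obtain ⟨ha_ge, hl⟩ := List.pairwise_cons.mp hl
    by_cases ha : a ∈ ν
    · obtain ⟨ν', rfl⟩ := Multiset.exists_cons_of_mem ha
      have hν' : ν' ≤ l := (Multiset.cons_le_cons_iff a).mp (by simpa using hν)
      simpa using add_le_add_right (ih hl hν') a
    · have hνl : ν ≤ l := (Multiset.le_cons_of_notMem ha).mp (by simpa using hν)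
      rcases Multiset.empty_or_exists_mem ν with rfl | ⟨x, hx⟩
      · simp
      obtain ⟨ν', rfl⟩ := Multiset.exists_cons_of_mem hx
      have hxa : x ≤ a := ha_ge x (Multiset.mem_coe.mp (Multiset.mem_of_le hνl hx))
      simpa using add_le_add hxa (ih hl ((Multiset.le_cons_self ν' x).trans hνl))

theorem Multiset.sum_le_sum_take_sort_reverse {M : Type*} [AddCommMonoid M] [LinearOrder M]
    [IsOrderedAddMonoid M] {ν μ : Multiset M} (h : ν ≤ μ) :
    ν.sum ≤ ((μ.sort (· ≤ ·)).reverse.take (card ν)).sum :=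
  List.sum_le_sum_take_card_of_pairwise_ge
    (List.pairwise_reverse.mpr (Multiset.pairwise_sort μ _)) (by simpa using h)

-- Written as in the statement, where `k` ranges over the image of `range n` in `ℚ`.
def descendingSegment (c : ℚ) (n : ℕ) : Multiset ℚ :=
  (range n).val.map fun k => c - k

theorem descendingSegment_eq_map (c : ℚ) (n : ℕ) :
    descendingSegment c n = (range n).val.map fun k : ℕ => c - k := by
  simp only [descendingSegment, Multiset.pure_def, Multiset.bind_def, Multiset.bind_singleton,
    Multiset.map_map, Function.comp_def]

@[simp]
theorem card_descendingSegment (c : ℚ) (n : ℕ) : Multiset.card (descendingSegment c n) = n := by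
  simp [descendingSegment_eq_map]

theorem sum_descendingSegment (c : ℚ) (n : ℕ) :
    (descendingSegment c n).sum = n * (c - (n - 1) / 2) := by
  rw [descendingSegment_eq_map]
  change ∑ k ∈ range n, (c - k) = _
  induction n with
  | zero => simp
  | succ n ih => rw [sum_range_succ, ih]; push_cast; ring

theorem sum_descendingSegment_self (a : ℕ) (b : ℚ) :
    (descendingSegment ((a - b) / 2) a).sum = a * (1 - b) / 2 := by
  rw [sum_descendingSegment]; ring

-- `(1 - b) / 2` is the midpoint of the full segment of length `a`, and an initial part of a
-- decreasing segment lies on average above its midpoint.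
theorem mul_one_sub_div_two_le_sum_descendingSegment {a b : ℚ} {m : ℕ} (hm : (m : ℚ) ≤ a) :
    m * (1 - b) / 2 ≤ (descendingSegment ((a - b) / 2) m).sum := by
  rw [sum_descendingSegment]
  nlinarith [(Nat.cast_nonneg m : (0 : ℚ) ≤ m)]

theorem sum_mul_le_sum_mul_of_sum_descendingSegment_eq {ι κ : Type*} {s : Finset ι}
    {t : Finset κ} {a' b' : ι → ℕ} {a b m : κ → ℕ} (hm : ∀ α ∈ t, m α ≤ a α)
    (h : ∑ i ∈ s, descendingSegment ((a' i - b' i) / 2) (a' i)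
      = ∑ α ∈ t, descendingSegment ((a α - b α) / 2) (m α)) :
    ∑ i ∈ s, a' i * b' i ≤ ∑ α ∈ t, m α * b α := by
  have hcard : ∑ i ∈ s, (a' i : ℚ) = ∑ α ∈ t, (m α : ℚ) := by
    exact_mod_cast by simpa using congrArg Multiset.card h
  have hsum : ∑ α ∈ t, (m α : ℚ) * (1 - b α) / 2 ≤ ∑ i ∈ s, (a' i : ℚ) * (1 - b' i) / 2 :=
    calc ∑ α ∈ t, (m α : ℚ) * (1 - b α) / 2
        ≤ ∑ α ∈ t, (descendingSegment ((a α - b α) / 2) (m α)).sum :=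
          sum_le_sum fun α hα =>
            mul_one_sub_div_two_le_sum_descendingSegment (by exact_mod_cast hm α hα)
      _ = ∑ i ∈ s, (descendingSegment ((a' i - b' i) / 2) (a' i)).sum := by
          rw [← Multiset.sum_sum, ← h, Multiset.sum_sum]
      _ = ∑ i ∈ s, (a' i : ℚ) * (1 - b' i) / 2 := by
          simp only [sum_descendingSegment_self]
  qify
  simp only [mul_sub, mul_one, sub_div, sum_sub_distrib, ← sum_div] at hsum
  linarith

theorem stmt_17_general (t r : ℕ) (a' b' : Fin t → ℕ)
    (aα bα : Fin r → ℕ)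
    (hdecomp : ∀ j : Fin t, ∃ m : Fin r → ℕ, (∀ α, m α ≤ aα α) ∧
      (∑ i ∈ Finset.univ.filter (fun i : Fin t => i ≤ j),
          (Finset.range (a' i)).val.map (fun k => ((a' i : ℚ) - b' i) / 2 - k))
        = ∑ α, (Finset.range (m α)).val.map (fun k => ((aα α : ℚ) - bα α) / 2 - k)) :
    ∀ j : Fin t,
      let μ : Multiset ℕ := ∑ α, Multiset.replicate (aα α) (bα α)
      (∑ i ∈ Finset.univ.filter (fun i : Fin t => i ≤ j), a' i * b' i)
        ≤ (((μ.sort (· ≤ ·)).reverse.take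
            (∑ i ∈ Finset.univ.filter (fun i : Fin t => i ≤ j), a' i)).sum) := by
  intro j μ
  obtain ⟨m, hm, h⟩ := hdecomp j
  change ∑ i ∈ _, descendingSegment _ (a' i) = ∑ α, descendingSegment _ (m α) at h
  let ν : Multiset ℕ := ∑ α, Multiset.replicate (m α) (bα α)
  have hνμ : ν ≤ μ := sum_le_sum fun α _ => (Multiset.replicate_le_replicate _).mpr (hm α)
  have hcard : Multiset.card ν = ∑ i ∈ univ.filter (· ≤ j), a' i := by
    simpa [ν] using (congrArg Multiset.card h).symm
  calc ∑ i ∈ univ.filter (· ≤ j), a' i * b' i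
      ≤ ∑ α, m α * bα α := sum_mul_le_sum_mul_of_sum_descendingSegment_eq (fun α _ => hm α) h
    _ = ν.sum := by simp [ν, Multiset.sum_sum]
    _ ≤ _ := hcard ▸ Multiset.sum_le_sum_take_sort_reverse hνμ

/-- Main inequality (4) in the proof of Clozel's orbit comparison theorem.
If for every `j` the multiset `E_{≤j}`, the union over `i ≤ j` of the decreasing
segments of length `a'_i` starting at `(a'_i - b'_i)/2`, decomposes as a disjoint
union over `α` of initial subsegments of the decreasing segments of length `aα α`
starting at `((aα α) - (bα α))/2`, then for every `j` the sum of the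
`∑_{i ≤ j} a'_i` largest elements of the multiset `{bα α with multiplicity aα α}`
is at least `∑_{i ≤ j} a'_i b'_i`. -/
theorem stmt_17 (t r : ℕ) (ht : 1 ≤ t) (a' b' : Fin t → ℕ)
    (ha' : ∀ i, 1 ≤ a' i) (hb' : ∀ i, 1 < b' i)
    (hb'dec : ∀ i j : Fin t, i ≤ j → b' j ≤ b' i)
    (aα bα : Fin r → ℕ) (haα : ∀ α, 1 ≤ aα α) (hbα : ∀ α, 1 ≤ bα α)
    (hdecomp : ∀ j : Fin t, ∃ m : Fin r → ℕ, (∀ α, m α ≤ aα α) ∧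
      (∑ i ∈ Finset.univ.filter (fun i : Fin t => i ≤ j),
          (Finset.range (a' i)).val.map (fun k => ((a' i : ℚ) - b' i) / 2 - k))
        = ∑ α, (Finset.range (m α)).val.map (fun k => ((aα α : ℚ) - bα α) / 2 - k)) :
    ∀ j : Fin t,
      let μ : Multiset ℕ := ∑ α, Multiset.replicate (aα α) (bα α)
      (∑ i ∈ Finset.univ.filter (fun i : Fin t => i ≤ j), a' i * b' i)
        ≤ (((μ.sort (· ≤ ·)).reverse.take
            (∑ i ∈ Finset.univ.filter (fun i : Fin t => i ≤ j), a' i)).sum) :=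
  stmt_17_general t r a' b' aα bα hdecomp
end
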